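/- arXiv:1804.04574 — 7 statements merged into one kernel-verified Lean document; each statement's English description precedes it below -/
import Mathlib

section
/- Let x be a non-separable internal vertex of a network graph and let A be a Boolean predicate defined on pairs (b,b') of boundary vertices such that the path P(b,b') passes through x. Suppose A is true for at least one such pair and false for at least one such pair. Define S¹ (resp. S²) as the set of sources b for which there exists b' with x ∈ P(b,b') and A(b,b') true (resp. false), and R¹, R² analogously for receivers. Then S¹ ∩ S² and R¹ ∩ R² cannot both be empty. -/
/-- `Thru VB P x b b'` : `b, b'` are distinct boundary vertices and the routing
path `P b b'` passes through `x`. -/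
def Thru {V : Type} (VB : Set V) (P : V → V → List V) (x b b' : V) : Prop :=
  b ∈ VB ∧ b' ∈ VB ∧ b ≠ b' ∧ x ∈ P b b'

/-- The set of sources of paths through `x`. -/
def Sx {V : Type} (VB : Set V) (P : V → V → List V) (x : V) : Set V :=
  {b | ∃ b', Thru VB P x b b'}

/-- The set of receivers of paths through `x`. -/
def Rx {V : Type} (VB : Set V) (P : V → V → List V) (x : V) : Set V :=
  {b' | ∃ b, Thru VB P x b b'}

/-- `x` is separable: the sources and receivers of paths through `x` admit
nonempty disjoint partitions such that no path through `x` runs between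
pieces with different indices. -/
def Separable {V : Type} (VB : Set V) (P : V → V → List V) (x : V) : Prop :=
  ∃ S1 S2 R1 R2 : Set V,
    S1.Nonempty ∧ S2.Nonempty ∧ R1.Nonempty ∧ R2.Nonempty ∧
    S1 ∩ S2 = ∅ ∧ R1 ∩ R2 = ∅ ∧
    S1 ∪ S2 = Sx VB P x ∧ R1 ∪ R2 = Rx VB P x ∧
    (∀ b b', ((b ∈ S1 ∧ b' ∈ R2) ∨ (b ∈ S2 ∧ b' ∈ R1)) → ¬ Thru VB P x b b')

/-!
If the sources and the receivers where `A` is true were disjoint from those where `A` is false,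
these four sets would partition `S_x` and `R_x`, and a path through `x` from a `true`-source to a
`false`-receiver (or vice versa) would put its source or its receiver in both sets, according to
the value of `A` on it. So `x` would be separable.
-/

section Split

variable {V : Type} (T : V → V → Prop) (A : V → V → Prop)

def sourcesWhere : Set V := {b | ∃ b', T b b' ∧ A b b'}

def receiversWhere : Set V := {b' | ∃ b, T b b' ∧ A b b'}

variable {T A}

lemma sourcesWhere_union_not :
    sourcesWhere T A ∪ sourcesWhere T (fun b b' => ¬ A b b') = {b | ∃ b', T b b'} := by
  ext b
  constructor
  · rintro (⟨b', h, _⟩ | ⟨b', h, _⟩) <;> exact ⟨b', h⟩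
  · rintro ⟨b', h⟩
    exact (em (A b b')).imp (fun hA => ⟨b', h, hA⟩) (fun hA => ⟨b', h, hA⟩)

lemma receiversWhere_union_not :
    receiversWhere T A ∪ receiversWhere T (fun b b' => ¬ A b b') = {b' | ∃ b, T b b'} := by
  ext b'
  constructor
  · rintro (⟨b, h, _⟩ | ⟨b, h, _⟩) <;> exact ⟨b, h⟩
  · rintro ⟨b, h⟩
    exact (em (A b b')).imp (fun hA => ⟨b, h, hA⟩) (fun hA => ⟨b, h, hA⟩)

lemma sourcesWhere_inter_nonempty_or_receiversWhere_inter_nonempty {B : V → V → Prop}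
    {b b' : V} (hT : T b b') (hb : b ∈ sourcesWhere T A) (hb' : b' ∈ receiversWhere T B)
    (hAB : A b b' ∨ B b b') :
    (sourcesWhere T A ∩ sourcesWhere T B).Nonempty ∨
      (receiversWhere T A ∩ receiversWhere T B).Nonempty :=
  hAB.elim (fun hA => Or.inr ⟨b', ⟨b, hT, hA⟩, hb'⟩) (fun hB => Or.inl ⟨b, hb, b', hT, hB⟩)

end Split

lemma separable_of_disjoint_split {V : Type} {VB : Set V} {P : V → V → List V} {x : V}
    {A : V → V → Prop} (htrue : ∃ b b', Thru VB P x b b' ∧ A b b')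
    (hfalse : ∃ b b', Thru VB P x b b' ∧ ¬ A b b')
    (hS : sourcesWhere (Thru VB P x) A ∩ sourcesWhere (Thru VB P x) (fun b b' => ¬ A b b') = ∅)
    (hR : receiversWhere (Thru VB P x) A ∩
      receiversWhere (Thru VB P x) (fun b b' => ¬ A b b') = ∅) :
    Separable VB P x := by
  obtain ⟨s₁, r₁, htrue⟩ := htrue
  obtain ⟨s₂, r₂, hfalse⟩ := hfalse
  refine ⟨sourcesWhere _ A, sourcesWhere _ (fun b b' => ¬ A b b'), receiversWhere _ A,
    receiversWhere _ (fun b b' => ¬ A b b'), ⟨s₁, r₁, htrue⟩, ⟨s₂, r₂, hfalse⟩,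
    ⟨r₁, s₁, htrue⟩, ⟨r₂, s₂, hfalse⟩,
    hS, hR, sourcesWhere_union_not, receiversWhere_union_not, ?_⟩
  have hdisj := not_or_intro (Set.not_nonempty_iff_eq_empty.mpr hS)
    (Set.not_nonempty_iff_eq_empty.mpr hR)
  rintro b b' (⟨hb, hb'⟩ | ⟨hb, hb'⟩) hT
  · exact hdisj <| sourcesWhere_inter_nonempty_or_receiversWhere_inter_nonempty hT hb hb' (em _)
  · rw [Set.inter_comm (sourcesWhere _ _), Set.inter_comm (receiversWhere _ _)] at hdisj
    exact hdisj <| sourcesWhere_inter_nonempty_or_receiversWhere_inter_nonempty hT hb hb' (em' _)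

theorem stmt_0_general {V : Type} (VB : Set V) (P : V → V → List V) (x : V)
    (hns : ¬ Separable VB P x) (A : V → V → Prop)
    (htrue : ∃ b b', Thru VB P x b b' ∧ A b b')
    (hfalse : ∃ b b', Thru VB P x b b' ∧ ¬ A b b') :
    ({b | ∃ b', Thru VB P x b b' ∧ A b b'} ∩
      {b | ∃ b', Thru VB P x b b' ∧ ¬ A b b'}).Nonempty ∨
    ({b' | ∃ b, Thru VB P x b b' ∧ A b b'} ∩
      {b' | ∃ b, Thru VB P x b b' ∧ ¬ A b b'}).Nonempty := by
  by_contra hcon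
  obtain ⟨hS, hR⟩ := not_or.mp hcon
  exact hns <| separable_of_disjoint_split htrue hfalse
    (Set.not_nonempty_iff_eq_empty.mp hS) (Set.not_nonempty_iff_eq_empty.mp hR)

/-- Lemma 1 of the paper: for a non-separable internal vertex `x` and a
non-constant predicate `A` on pairs of boundary vertices whose path passes
through `x`, the source sets `S¹, S²` (where `A` is true resp. false) and the
receiver sets `R¹, R²` cannot both be disjoint. -/
theorem stmt_0 {V : Type} (VB : Set V) (P : V → V → List V) (x : V)
    (hx : x ∉ VB) (hns : ¬ Separable VB P x) (A : V → V → Prop)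
    (htrue : ∃ b b', Thru VB P x b b' ∧ A b b')
    (hfalse : ∃ b b', Thru VB P x b b' ∧ ¬ A b b') :
    ({b | ∃ b', Thru VB P x b b' ∧ A b b'} ∩
      {b | ∃ b', Thru VB P x b b' ∧ ¬ A b b'}).Nonempty ∨
    ({b' | ∃ b, Thru VB P x b b' ∧ A b b'} ∩
      {b' | ∃ b, Thru VB P x b b' ∧ ¬ A b b'}).Nonempty :=
  stmt_0_general VB P x hns A htrue hfalse
end

section
/- Let x be a non-separable internal vertex of a network graph with symmetric routing, and let B be a symmetric Boolean predicate (B(b,b') = B(b',b)) defined on pairs (b,b') of boundary vertices whose connecting path passes through x. Suppose B is non-constant on such pairs. Define S¹ as the set of boundary vertices b for which there exists b₁ with x ∈ P(b,b₁) and B(b,b₁) true, and S² analogously with B false. Then S¹ ∩ S² is nonempty. -/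
/-- Symmetric routing: edges come in opposite pairs and the path from `b'` to `b`
is the reversal of the path from `b` to `b'`. -/
def SymRouting {V : Type} (E : V → V → Prop) (VB : Set V) (P : V → V → List V) : Prop :=
  (∀ u v, E u v → E v u) ∧
  (∀ b b', b ∈ VB → b' ∈ VB → b ≠ b' → P b' b = (P b b').reverse)

/-- Separability of an internal vertex for symmetric routing: a nonempty disjoint
partition of the source set such that no path through `x` joins the two pieces. -/
def SeparableSym {V : Type} (VB : Set V) (P : V → V → List V) (x : V) : Prop :=
  ∃ S1 S2 : Set V, S1.Nonempty ∧ S2.Nonempty ∧ S1 ∩ S2 = ∅ ∧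
    S1 ∪ S2 = Sx VB P x ∧
    (∀ b1 ∈ S1, ∀ b2 ∈ S2, ¬ Thru VB P x b1 b2)

/-- The paper's `S¹` and `S²` are `thruSources VB P x B` and `thruSources VB P x (¬ B · ·)`. -/
def thruSources {V : Type} (VB : Set V) (P : V → V → List V) (x : V) (R : V → V → Prop) :
    Set V :=
  {b | ∃ b', Thru VB P x b b' ∧ R b b'}

section

variable {V : Type} {E : V → V → Prop} {VB : Set V} {P : V → V → List V} {x : V}

theorem SymRouting.thru_symm (hsr : SymRouting E VB P) {b b' : V} (h : Thru VB P x b b') :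
    Thru VB P x b' b := by
  obtain ⟨hb, hb', hne, hmem⟩ := h
  refine ⟨hb', hb, hne.symm, ?_⟩
  rw [hsr.2 b b' hb hb' hne, List.mem_reverse]
  exact hmem

theorem thruSources_union_not (R : V → V → Prop) :
    thruSources VB P x R ∪ thruSources VB P x (fun b b' => ¬ R b b') = Sx VB P x := by
  ext b
  constructor
  · rintro (⟨b', ht, -⟩ | ⟨b', ht, -⟩) <;> exact ⟨b', ht⟩
  · rintro ⟨b', ht⟩
    by_cases hR : R b b'
    exacts [Or.inl ⟨b', ht, hR⟩, Or.inr ⟨b', ht, hR⟩]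

theorem SymRouting.not_thru_of_disjoint (hsr : SymRouting E VB P) {R : V → V → Prop}
    (hRsymm : ∀ b b', R b b' ↔ R b' b)
    (hdisj : Disjoint (thruSources VB P x R) (thruSources VB P x (fun b b' => ¬ R b b')))
    {b₁ b₂ : V} (hb₁ : b₁ ∈ thruSources VB P x R)
    (hb₂ : b₂ ∈ thruSources VB P x (fun b b' => ¬ R b b')) :
    ¬ Thru VB P x b₁ b₂ := by
  intro ht
  by_cases hR : R b₁ b₂
  · exact hdisj.notMem_of_mem_left ⟨b₁, hsr.thru_symm ht, (hRsymm b₁ b₂).mp hR⟩ hb₂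
  · exact hdisj.notMem_of_mem_left hb₁ ⟨b₂, ht, hR⟩

theorem SymRouting.separableSym_of_disjoint (hsr : SymRouting E VB P) {R : V → V → Prop}
    (hRsymm : ∀ b b', R b b' ↔ R b' b) (htrue : (thruSources VB P x R).Nonempty)
    (hfalse : (thruSources VB P x (fun b b' => ¬ R b b')).Nonempty)
    (hdisj : Disjoint (thruSources VB P x R) (thruSources VB P x (fun b b' => ¬ R b b'))) :
    SeparableSym VB P x :=
  ⟨_, _, htrue, hfalse, hdisj.inter_eq, thruSources_union_not R,
    fun _ hb₁ _ hb₂ => hsr.not_thru_of_disjoint hRsymm hdisj hb₁ hb₂⟩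

end

theorem stmt_1_general {V : Type} (E : V → V → Prop) (VB : Set V) (P : V → V → List V)
    (hsr : SymRouting E VB P) (x : V)
    (hns : ¬ SeparableSym VB P x) (B : V → V → Prop)
    (hBsym : ∀ b b', B b b' ↔ B b' b)
    (htrue : ∃ b b1, Thru VB P x b b1 ∧ B b b1)
    (hfalse : ∃ b b2, Thru VB P x b b2 ∧ ¬ B b b2) :
    ({b | ∃ b1, Thru VB P x b b1 ∧ B b b1} ∩
      {b | ∃ b2, Thru VB P x b b2 ∧ ¬ B b b2}).Nonempty := by
  by_contra hne
  exact hns <| hsr.separableSym_of_disjoint hBsym htrue hfalse <|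
    Set.disjoint_iff_inter_eq_empty.mpr (Set.not_nonempty_iff_eq_empty.mp hne)

/-- Lemma 2 of the paper: for a non-separable internal vertex `x` of a network
graph with symmetric routing and a symmetric non-constant predicate `B` on pairs
of boundary vertices whose path passes through `x`, the sets `S¹` (sources of
paths where `B` holds) and `S²` (where `B` fails) intersect. -/
theorem stmt_1 {V : Type} (E : V → V → Prop) (VB : Set V) (P : V → V → List V)
    (hsr : SymRouting E VB P) (x : V) (hx : x ∉ VB)
    (hns : ¬ SeparableSym VB P x) (B : V → V → Prop)
    (hBsym : ∀ b b', B b b' ↔ B b' b)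
    (htrue : ∃ b b1, Thru VB P x b b1 ∧ B b b1)
    (hfalse : ∃ b b2, Thru VB P x b b2 ∧ ¬ B b b2) :
    ({b | ∃ b1, Thru VB P x b b1 ∧ B b b1} ∩
      {b | ∃ b2, Thru VB P x b b2 ∧ ¬ B b b2}).Nonempty :=
  stmt_1_general E VB P hsr x hns B hBsym htrue hfalse
end

section
/- In a network graph with the tree consistency property, for any three distinct boundary vertices b, b₁, b₂, the paths P(b,b₁) and P(b,b₂) can be written as P(b,b₁) = [b, x₁, ..., x_j, y₁, ..., b₁] and P(b,b₂) = [b, x₁, ..., x_j, z₁, ..., b₂] where the vertex sets {y₁, y₂, ...} and {z₁, z₂, ...} are disjoint; i.e., the two paths share a common initial segment and are vertex-disjoint thereafter. -/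
/-- Well-formedness of a routing path system: each path `P b b'` between distinct
boundary vertices starts at `b`, ends at `b'`, is simple (no repeated vertices),
follows edges of `E`, and passes through no boundary vertex other than its
endpoints. -/
def WellFormed {V : Type} (E : V → V → Prop) (VB : Set V) (P : V → V → List V) : Prop :=
  ∀ b b', b ∈ VB → b' ∈ VB → b ≠ b' →
    (P b b').head? = some b ∧ (P b b').getLast? = some b' ∧
    (P b b').Nodup ∧ List.Chain' E (P b b') ∧
    (∀ v ∈ P b b', v ∈ VB → v = b ∨ v = b')

/-- Tree consistency: the common part of any two routing paths is a connected
subpath, i.e. the set of common vertices is the vertex set of a single list `c`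
which is a contiguous segment of both paths (possibly reversed in the second). -/
def TreeConsistent {V : Type} (VB : Set V) (P : V → V → List V) : Prop :=
  ∀ b1 b1' b2 b2', b1 ∈ VB → b1' ∈ VB → b2 ∈ VB → b2' ∈ VB → b1 ≠ b1' → b2 ≠ b2' →
    ∃ c : List V, c <:+: P b1 b1' ∧ (c <:+: P b2 b2' ∨ c.reverse <:+: P b2 b2') ∧
      ∀ v, (v ∈ P b1 b1' ∧ v ∈ P b2 b2') ↔ v ∈ c

/-! The common part `c` of two simple paths out of `b` contains `b`, so, being a segment of
each path, it is an initial segment of each. If it occurs reversed in the second path, then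
`c` both starts and ends at `b`, so it is the one-vertex path `[b]`, which is its own reverse.
The remaining vertices of the two paths cannot meet: a common vertex would lie in `c`, and
the paths are simple. -/

namespace List

variable {α : Type*} {l l₁ l₂ c : List α} {a : α}

theorem IsPrefix.head?_eq (h : c <+: l) (hc : c ≠ []) : c.head? = l.head? := by
  obtain ⟨t, rfl⟩ := h
  cases c with
  | nil => contradiction
  | cons x c => rfl

theorem IsInfix.isPrefix_of_head?_mem (h : c <:+: l) (hnd : l.Nodup) (hl : l.head? = some a)
    (ha : a ∈ c) : c <+: l := by
  have hne : l ≠ [] := by rintro rfl; simp at hl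
  exact hnd.prefix_of_head_mem_of_infix h (hne := hne)
    (by rwa [(head_eq_iff_head?_eq_some hne).2 hl])

theorem Nodup.reverse_eq_self_of_head?_eq_getLast? (hnd : c.Nodup)
    (h : c.head? = c.getLast?) : c.reverse = c := by
  cases c with
  | nil => rfl
  | cons x c =>
    obtain ⟨y, hy⟩ := (hnd.head_eq_getLast_iff (cons_ne_nil x c)).1 <| by
      simpa [getLast?_eq_some_getLast (cons_ne_nil x c)] using h
    rw [hy, reverse_singleton]

theorem exists_common_prefix_of_infix (hnd₁ : l₁.Nodup) (hnd₂ : l₂.Nodup)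
    (hl₁ : l₁.head? = some a) (hl₂ : l₂.head? = some a) (hc₁ : c <:+: l₁)
    (hc₂ : c <:+: l₂ ∨ c.reverse <:+: l₂) (hmem : ∀ v, (v ∈ l₁ ∧ v ∈ l₂) ↔ v ∈ c) :
    ∃ y z : List α, l₁ = c ++ y ∧ l₂ = c ++ z ∧ c ≠ [] ∧ ∀ v ∈ y, v ∉ z := by
  have hac : a ∈ c := (hmem a).1 ⟨mem_of_mem_head? hl₁, mem_of_mem_head? hl₂⟩
  have hc : c ≠ [] := ne_nil_of_mem hac
  have hp₁ : c <+: l₁ := hc₁.isPrefix_of_head?_mem hnd₁ hl₁ hac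
  have hp₂ : c <+: l₂ := by
    rcases hc₂ with h | h
    · exact h.isPrefix_of_head?_mem hnd₂ hl₂ hac
    · have hr : c.reverse <+: l₂ := h.isPrefix_of_head?_mem hnd₂ hl₂ (mem_reverse.2 hac)
      have hends : c.head? = c.getLast? := by
        rw [hp₁.head?_eq hc, hl₁, ← head?_reverse, hr.head?_eq (reverse_ne_nil_iff.2 hc), hl₂]
      rwa [(hnd₁.sublist hp₁.sublist).reverse_eq_self_of_head?_eq_getLast? hends] at hr
  obtain ⟨y, rfl⟩ := hp₁
  obtain ⟨z, rfl⟩ := hp₂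
  refine ⟨y, z, rfl, rfl, hc, fun v hvy hvz => ?_⟩
  have hvc : v ∈ c := (hmem v).1 ⟨mem_append_right c hvy, mem_append_right c hvz⟩
  exact disjoint_of_nodup_append hnd₁ hvc hvy

end List

theorem stmt_2_general {V : Type} (E : V → V → Prop) (VB : Set V) (P : V → V → List V)
    (hwf : WellFormed E VB P) (htc : TreeConsistent VB P)
    (b b1 b2 : V) (hb : b ∈ VB) (hb1 : b1 ∈ VB) (hb2 : b2 ∈ VB)
    (hbb1 : b ≠ b1) (hbb2 : b ≠ b2) :
    ∃ c y z : List V, P b b1 = c ++ y ∧ P b b2 = c ++ z ∧ c ≠ [] ∧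
      ∀ v ∈ y, v ∉ z := by
  obtain ⟨c, hc₁, hc₂, hmem⟩ := htc b b1 b b2 hb hb1 hb hb2 hbb1 hbb2
  obtain ⟨hstart₁, -, hnd₁, -, -⟩ := hwf b b1 hb hb1 hbb1
  obtain ⟨hstart₂, -, hnd₂, -, -⟩ := hwf b b2 hb hb2 hbb2
  exact ⟨c, List.exists_common_prefix_of_infix hnd₁ hnd₂ hstart₁ hstart₂ hc₁ hc₂ hmem⟩

/-- In a network graph with the tree consistency property, two paths out of the
same boundary vertex `b` share a common initial segment and are vertex-disjoint
thereafter. -/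
theorem stmt_2 {V : Type} (E : V → V → Prop) (VB : Set V) (P : V → V → List V)
    (hwf : WellFormed E VB P) (htc : TreeConsistent VB P)
    (b b1 b2 : V) (hb : b ∈ VB) (hb1 : b1 ∈ VB) (hb2 : b2 ∈ VB)
    (hbb1 : b ≠ b1) (hbb2 : b ≠ b2) (hb12 : b1 ≠ b2) :
    ∃ c y z : List V, P b b1 = c ++ y ∧ P b b2 = c ++ z ∧ c ≠ [] ∧
      ∀ v ∈ y, v ∉ z :=
  stmt_2_general E VB P hwf htc b b1 b2 hb hb1 hb2 hbb1 hbb2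
end

section
/- Let x be an internal vertex of a network graph with the tree consistency property. Define a relation on S_x by b₁ ∼ b₂ if there exists a boundary vertex b̂ with x ∈ P(b₁,b̂) and x ∈ P(b₂,b̂), and take its transitive closure ∼_S; define ∼_R dually on R_x. Then these relations are dual: if x ∈ P(b₁,b̂₁) and x ∈ P(b₂,b̂₂), then b₁ ∼_S b₂ if and only if b̂₁ ∼_R b̂₂. -/
/-- Base relation on sources: `b₁ ∼ b₂` if some common receiver `b̂` has `x` on
both `P b₁ b̂` and `P b₂ b̂`. -/
def SRel {V : Type} (VB : Set V) (P : V → V → List V) (x : V) : V → V → Prop :=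
  fun b1 b2 => ∃ bh, Thru VB P x b1 bh ∧ Thru VB P x b2 bh

/-- Base relation on receivers: `b̂₁ ∼ b̂₂` if some common source `b` has `x` on
both `P b b̂₁` and `P b b̂₂`. -/
def RRel {V : Type} (VB : Set V) (P : V → V → List V) (x : V) : V → V → Prop :=
  fun bh1 bh2 => ∃ b, Thru VB P x b bh1 ∧ Thru VB P x b bh2

open Relation

theorem transGen_commonSource_of_transGen_commonTarget {α β : Type*} {T : α → β → Prop}
    {a a' : α} (h : TransGen (fun a₁ a₂ => ∃ c, T a₁ c ∧ T a₂ c) a a')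
    {c c' : β} (hc : T a c) (hc' : T a' c') :
    TransGen (fun c₁ c₂ => ∃ a, T a c₁ ∧ T a c₂) c c' := by
  induction h generalizing c' with
  | single hstep =>
    obtain ⟨d, had, ha'd⟩ := hstep
    exact (TransGen.single ⟨a, hc, had⟩).tail ⟨_, ha'd, hc'⟩
  | tail _ hstep ih =>
    obtain ⟨d, hbd, ha'd⟩ := hstep
    exact (ih hbd).tail ⟨_, ha'd, hc'⟩

theorem stmt_5_general {V : Type} (VB : Set V) (P : V → V → List V)
    (x : V) :
    ∀ b1 b2 bh1 bh2 : V, Thru VB P x b1 bh1 → Thru VB P x b2 bh2 →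
      (Relation.TransGen (SRel VB P x) b1 b2 ↔
        Relation.TransGen (RRel VB P x) bh1 bh2) :=
  fun _ _ _ _ h1 h2 =>
    ⟨fun h => transGen_commonSource_of_transGen_commonTarget h h1 h2,
      fun h => transGen_commonSource_of_transGen_commonTarget (T := flip (Thru VB P x)) h h1 h2⟩

/-- Duality of the source and receiver equivalence relations at an internal
vertex `x`: if `x ∈ P(b₁,b̂₁)` and `x ∈ P(b₂,b̂₂)`, then `b₁ ∼_S b₂` iff
`b̂₁ ∼_R b̂₂` (transitive closures of the base relations). -/
theorem stmt_5 {V : Type} (E : V → V → Prop) (VB : Set V) (P : V → V → List V)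
    (hwf : WellFormed E VB P) (htc : TreeConsistent VB P)
    (x : V) (hx : x ∉ VB) :
    ∀ b1 b2 bh1 bh2 : V, Thru VB P x b1 bh1 → Thru VB P x b2 bh2 →
      (Relation.TransGen (SRel VB P x) b1 b2 ↔
        Relation.TransGen (RRel VB P x) bh1 bh2) :=
  stmt_5_general VB P x
end

section
/- Let x be an internal vertex of a network graph with the tree consistency property. If S_x = S¹ ∪ S² and R_x = R¹ ∪ R² are nonempty disjoint partitions witnessing separability of x, then for any b ∈ S_x, the equivalence class [b]_S under the source relation ∼_S is entirely contained in S¹ or entirely contained in S². (That is, the equivalence classes of ∼_S give the finest separating partition.) -/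
open Relation

section Separation

variable {V : Type} {VB : Set V} {P : V → V → List V} {x : V} {S1 S2 R1 R2 : Set V}

theorem mem_of_sRel (hS : Sx VB P x ⊆ S1 ∪ S2) (hR : Rx VB P x ⊆ R1 ∪ R2)
    (hsep12 : ∀ b b', b ∈ S1 → b' ∈ R2 → ¬ Thru VB P x b b')
    (hsep21 : ∀ b b', b ∈ S2 → b' ∈ R1 → ¬ Thru VB P x b b')
    {b1 b2 : V} (h : SRel VB P x b1 b2) (hb1 : b1 ∈ S1) : b2 ∈ S1 := by
  obtain ⟨bh, h1, h2⟩ := h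
  have hbh : bh ∈ R1 := (hR ⟨b1, h1⟩).resolve_right (hsep12 b1 bh hb1 · h1)
  exact (hS ⟨bh, h2⟩).resolve_right (hsep21 b2 bh · hbh h2)

theorem mem_of_transGen_sRel (hS : Sx VB P x ⊆ S1 ∪ S2) (hR : Rx VB P x ⊆ R1 ∪ R2)
    (hsep12 : ∀ b b', b ∈ S1 → b' ∈ R2 → ¬ Thru VB P x b b')
    (hsep21 : ∀ b b', b ∈ S2 → b' ∈ R1 → ¬ Thru VB P x b b')
    {b b' : V} (h : TransGen (SRel VB P x) b b') (hb : b ∈ S1) : b' ∈ S1 := by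
  induction h with
  | single hr => exact mem_of_sRel hS hR hsep12 hsep21 hr hb
  | tail _ hr ih => exact mem_of_sRel hS hR hsep12 hsep21 hr ih

end Separation

theorem stmt_7_general {V : Type} (VB : Set V) (P : V → V → List V)
    (x : V)
    (S1 S2 R1 R2 : Set V)
    (hSuni : S1 ∪ S2 = Sx VB P x) (hRuni : R1 ∪ R2 = Rx VB P x)
    (hsep : ∀ b b', ((b ∈ S1 ∧ b' ∈ R2) ∨ (b ∈ S2 ∧ b' ∈ R1)) → ¬ Thru VB P x b b') :
    ∀ b ∈ Sx VB P x,
      {b' | Relation.TransGen (SRel VB P x) b b'} ⊆ S1 ∨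
      {b' | Relation.TransGen (SRel VB P x) b b'} ⊆ S2 := by
  have hS : Sx VB P x ⊆ S1 ∪ S2 := hSuni.ge
  have hR : Rx VB P x ⊆ R1 ∪ R2 := hRuni.ge
  have hsep12 b b' (hb : b ∈ S1) (hb' : b' ∈ R2) := hsep b b' (.inl ⟨hb, hb'⟩)
  have hsep21 b b' (hb : b ∈ S2) (hb' : b' ∈ R1) := hsep b b' (.inr ⟨hb, hb'⟩)
  intro b hb
  rcases hS hb with hb1 | hb2
  · exact .inl fun _ h ↦ mem_of_transGen_sRel hS hR hsep12 hsep21 h hb1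
  · refine .inr fun _ h ↦ mem_of_transGen_sRel ?_ ?_ hsep21 hsep12 h hb2
    · exact hS.trans (Set.union_comm S1 S2).le
    · exact hR.trans (Set.union_comm R1 R2).le

/-- If `S¹,S²,R¹,R²` is a nonempty disjoint separating partition for the internal
vertex `x`, then every equivalence class of the source relation `∼_S` is entirely
contained in `S¹` or entirely contained in `S²`. -/
theorem stmt_7 {V : Type} (E : V → V → Prop) (VB : Set V) (P : V → V → List V)
    (hwf : WellFormed E VB P) (htc : TreeConsistent VB P)
    (x : V) (hx : x ∉ VB)
    (S1 S2 R1 R2 : Set V)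
    (hS1 : S1.Nonempty) (hS2 : S2.Nonempty) (hR1 : R1.Nonempty) (hR2 : R2.Nonempty)
    (hSdisj : S1 ∩ S2 = ∅) (hRdisj : R1 ∩ R2 = ∅)
    (hSuni : S1 ∪ S2 = Sx VB P x) (hRuni : R1 ∪ R2 = Rx VB P x)
    (hsep : ∀ b b', ((b ∈ S1 ∧ b' ∈ R2) ∨ (b ∈ S2 ∧ b' ∈ R1)) → ¬ Thru VB P x b b') :
    ∀ b ∈ Sx VB P x,
      {b' | Relation.TransGen (SRel VB P x) b b'} ⊆ S1 ∨
      {b' | Relation.TransGen (SRel VB P x) b b'} ⊆ S2 :=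
  stmt_7_general VB P x S1 S2 R1 R2 hSuni hRuni hsep
end

section
/- Let x be a separable internal vertex of a network graph with tree consistency, split according to a separating partition S_x = S¹∪S², R_x = R¹∪R² into two vertices x₁ (serving paths from S¹ to R¹) and x₂ (serving paths from S² to R²). Then for every triple of boundary vertices (b, b₁, b₂), the length of the intersection P(b,b₁) ∩ P(b,b₂) is unchanged by the split, and likewise for intersections P(b₁,b) ∩ P(b₂,b); hence the Path Correlation Data of the split graph equals that of the original graph. -/
/-- The list of directed edges traversed by a path (as consecutive pairs). -/
def pathEdges {V : Type} (p : List V) : List (V × V) := p.zip p.tail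

/-- The length of a path: the sum of its edge weights. -/
def pathLen {V : Type} (W : V × V → ℝ) (p : List V) : ℝ :=
  ((pathEdges p).map W).sum

/-- The length of the intersection of two paths: sum of weights of the edges
common to both. -/
def interLen {V : Type} [DecidableEq V] (W : V × V → ℝ) (p q : List V) : ℝ :=
  (((pathEdges p).filter (fun e => decide (e ∈ pathEdges q))).map W).sum

/-!
Splitting `x` is modelled by the projection `π` collapsing the copies `x₁, x₂` back onto `x`:
every split path maps onto the original path and every weight is pulled back along `π`.
Lengths of single paths are therefore preserved outright. For intersections, the only
danger is an edge through `x₁` in one path and the corresponding edge through `x₂` in the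
other, which `π` would merge. This cannot happen: a split path through `x₁` runs from
`S¹` to `R¹`, one through `x₂` from `S²` to `R²`, and two paths sharing their source (or
their receiver) would put it in `S¹ ∩ S²` (or `R¹ ∩ R²`).
-/

section PathMap

variable {V : Type} (W : V × V → ℝ) (f : V → V)

lemma pathEdges_map (p : List V) :
    pathEdges (p.map f) = (pathEdges p).map (Prod.map f f) := by
  simp [pathEdges, ← List.map_tail, List.zip_map]

lemma mem_of_mem_pathEdges {e : V × V} {p : List V} (h : e ∈ pathEdges p) :
    e.1 ∈ p ∧ e.2 ∈ p :=
  have h' := List.of_mem_zip h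
  ⟨h'.1, List.mem_of_mem_tail h'.2⟩

lemma pathLen_map (p : List V) : pathLen W (p.map f) = pathLen (W ∘ Prod.map f f) p := by
  rw [pathLen, pathLen, pathEdges_map, List.map_map]

lemma interLen_map [DecidableEq V] {p q : List V}
    (hf : ∀ u ∈ p, ∀ v ∈ q, f u = f v → u = v) :
    interLen W (p.map f) (q.map f) = interLen (W ∘ Prod.map f f) p q := by
  rw [interLen, interLen, pathEdges_map, pathEdges_map, List.filter_map, List.map_map]
  congr 2
  refine List.filter_congr fun e he => ?_
  simp only [Function.comp_apply, decide_eq_decide, List.mem_map]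
  constructor
  · rintro ⟨e', he', hfe⟩
    have hp := mem_of_mem_pathEdges he
    have hq := mem_of_mem_pathEdges he'
    have h1 : e'.1 = e.1 := (hf _ hp.1 _ hq.1 (congrArg Prod.fst hfe).symm).symm
    have h2 : e'.2 = e.2 := (hf _ hp.2 _ hq.2 (congrArg Prod.snd hfe).symm).symm
    exact Prod.ext h1 h2 ▸ he'
  · exact fun h => ⟨e, h, rfl⟩

end PathMap

section Split

variable {V : Type} {π : V → V} {x x1 x2 : V}

lemma eq_of_collapse_eq (hπ1 : π x1 = x) (hπ2 : π x2 = x)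
    (hπid : ∀ v, v ≠ x1 → v ≠ x2 → π v = v) {p q : List V} (hxp : x ∉ p) (hxq : x ∉ q)
    (h12 : x1 ∈ p → x2 ∉ q) (h21 : x2 ∈ p → x1 ∉ q) :
    ∀ u ∈ p, ∀ v ∈ q, π u = π v → u = v := by
  intro u hu v hv huv
  by_cases hu' : u = x1 ∨ u = x2 <;> by_cases hv' : v = x1 ∨ v = x2 <;> grind

variable {VB : Set V} {P P' : V → V → List V}

lemma endpoints_mem_of_mem_split {y : V} {S T R R' : Set V}
    (hST : S ∪ T = Sx VB P x) (hRR' : R ∪ R' = Rx VB P x)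
    (hsep : ∀ b b', b ∈ S → b' ∈ R' → ¬ Thru VB P x b b')
    (hT : ∀ b b', Thru VB P x b b' → b ∈ T → y ∉ P' b b') (hy : π y = x)
    (hproj : ∀ b b', b ∈ VB → b' ∈ VB → b ≠ b' → (P' b b').map π = P b b')
    ⦃a a' : V⦄ (ha : a ∈ VB) (ha' : a' ∈ VB) (haa' : a ≠ a') (hya : y ∈ P' a a') :
    a ∈ S ∧ a' ∈ R := by
  have hthru : Thru VB P x a a' :=
    ⟨ha, ha', haa', hproj a a' ha ha' haa' ▸ hy ▸ List.mem_map_of_mem hya⟩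
  have haS : a ∈ S := by
    rcases (hST ▸ ⟨a', hthru⟩ : a ∈ S ∪ T) with h | h
    · exact h
    · exact absurd hya (hT a a' hthru h)
  refine ⟨haS, ?_⟩
  rcases (hRR' ▸ ⟨a, hthru⟩ : a' ∈ R ∪ R') with h | h
  · exact h
  · exact absurd hthru (hsep a a' haS h)

end Split

theorem stmt_11_general {V : Type} [DecidableEq V]
    (W : V × V → ℝ) (VB : Set V) (P : V → V → List V)
    (x : V)
    -- a separating partition for x
    (S1 S2 R1 R2 : Set V)
    (hSdisj : S1 ∩ S2 = ∅) (hRdisj : R1 ∩ R2 = ∅)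
    (hSuni : S1 ∪ S2 = Sx VB P x) (hRuni : R1 ∪ R2 = Rx VB P x)
    (hsep : ∀ b b', ((b ∈ S1 ∧ b' ∈ R2) ∨ (b ∈ S2 ∧ b' ∈ R1)) → ¬ Thru VB P x b b')
    -- the split graph: x replaced by x₁ (serving S¹→R¹) and x₂ (serving S²→R²)
    (x1 x2 : V) (W' : V × V → ℝ) (P' : V → V → List V)
    (π : V → V) (hπ1 : π x1 = x) (hπ2 : π x2 = x)
    (hπid : ∀ v, v ≠ x1 → v ≠ x2 → π v = v)
    (hproj : ∀ b b', b ∈ VB → b' ∈ VB → b ≠ b' → (P' b b').map π = P b b')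
    (hW' : ∀ u v : V, W' (u, v) = W (π u, π v))
    (hxgone : ∀ b b', b ∈ VB → b' ∈ VB → b ≠ b' → x ∉ P' b b')
    (hsplit1 : ∀ b b', Thru VB P x b b' → b ∈ S1 → x1 ∈ P' b b' ∧ x2 ∉ P' b b')
    (hsplit2 : ∀ b b', Thru VB P x b b' → b ∈ S2 → x2 ∈ P' b b' ∧ x1 ∉ P' b b') :
    ∀ b b1 b2 : V, b ∈ VB → b1 ∈ VB → b2 ∈ VB → b ≠ b1 → b ≠ b2 → b1 ≠ b2 →
      pathLen W' (P' b b1) = pathLen W (P b b1) ∧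
      interLen W' (P' b b1) (P' b b2) = interLen W (P b b1) (P b b2) ∧
      interLen W' (P' b1 b) (P' b2 b) = interLen W (P b1 b) (P b2 b) := by
  intro b b1 b2 hb hb1 hb2 hbb1 hbb2 _
  have hW : W' = W ∘ Prod.map π π := funext fun e => hW' e.1 e.2
  have copy1 := endpoints_mem_of_mem_split hSuni hRuni
    (fun b b' hS hR => hsep b b' (.inl ⟨hS, hR⟩)) (fun b b' t h => (hsplit2 b b' t h).2) hπ1 hproj
  have copy2 := endpoints_mem_of_mem_split (Set.union_comm S2 S1 ▸ hSuni)
    (Set.union_comm R2 R1 ▸ hRuni) (fun b b' hS hR => hsep b b' (.inr ⟨hS, hR⟩))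
    (fun b b' t h => (hsplit1 b b' t h).2) hπ2 hproj
  have hbS : b ∉ S1 ∩ S2 := hSdisj ▸ Set.notMem_empty b
  have hbR : b ∉ R1 ∩ R2 := hRdisj ▸ Set.notMem_empty b
  refine ⟨?_, ?_, ?_⟩
  · rw [← hproj b b1 hb hb1 hbb1, pathLen_map, hW]
  · rw [← hproj b b1 hb hb1 hbb1, ← hproj b b2 hb hb2 hbb2, interLen_map, hW]
    refine eq_of_collapse_eq hπ1 hπ2 hπid (hxgone b b1 hb hb1 hbb1) (hxgone b b2 hb hb2 hbb2)
      (fun h h' => hbS ⟨(copy1 hb hb1 hbb1 h).1, (copy2 hb hb2 hbb2 h').1⟩)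
      (fun h h' => hbS ⟨(copy1 hb hb2 hbb2 h').1, (copy2 hb hb1 hbb1 h).1⟩)
  · rw [← hproj b1 b hb1 hb hbb1.symm, ← hproj b2 b hb2 hb hbb2.symm, interLen_map, hW]
    refine eq_of_collapse_eq hπ1 hπ2 hπid (hxgone b1 b hb1 hb hbb1.symm)
      (hxgone b2 b hb2 hb hbb2.symm)
      (fun h h' => hbR ⟨(copy1 hb1 hb hbb1.symm h).2, (copy2 hb2 hb hbb2.symm h').2⟩)
      (fun h h' => hbR ⟨(copy1 hb2 hb hbb2.symm h').2, (copy2 hb1 hb hbb1.symm h).2⟩)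

/-- Splitting a separable internal vertex `x` into two vertices `x₁, x₂`
according to a separating partition `S¹∪S², R¹∪R²` leaves the Path Correlation
Data unchanged: all path lengths, source-side intersection lengths and
receiver-side intersection lengths are the same before and after the split. -/
theorem stmt_11 {V : Type} [DecidableEq V]
    (E : V → V → Prop) (W : V × V → ℝ) (VB : Set V) (P : V → V → List V)
    (hwf : WellFormed E VB P) (htc : TreeConsistent VB P)
    (x : V) (hx : x ∉ VB)
    -- a separating partition for x
    (S1 S2 R1 R2 : Set V)
    (hS1 : S1.Nonempty) (hS2 : S2.Nonempty) (hR1 : R1.Nonempty) (hR2 : R2.Nonempty)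
    (hSdisj : S1 ∩ S2 = ∅) (hRdisj : R1 ∩ R2 = ∅)
    (hSuni : S1 ∪ S2 = Sx VB P x) (hRuni : R1 ∪ R2 = Rx VB P x)
    (hsep : ∀ b b', ((b ∈ S1 ∧ b' ∈ R2) ∨ (b ∈ S2 ∧ b' ∈ R1)) → ¬ Thru VB P x b b')
    -- the split graph: x replaced by x₁ (serving S¹→R¹) and x₂ (serving S²→R²)
    (x1 x2 : V) (E' : V → V → Prop) (W' : V × V → ℝ) (P' : V → V → List V)
    (hx1x2 : x1 ≠ x2) (hx1x : x1 ≠ x) (hx2x : x2 ≠ x)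
    (hx1B : x1 ∉ VB) (hx2B : x2 ∉ VB)
    (hfresh : ∀ b b', b ∈ VB → b' ∈ VB → b ≠ b' → x1 ∉ P b b' ∧ x2 ∉ P b b')
    (π : V → V) (hπ1 : π x1 = x) (hπ2 : π x2 = x)
    (hπid : ∀ v, v ≠ x1 → v ≠ x2 → π v = v)
    (hwf' : WellFormed E' VB P')
    (hproj : ∀ b b', b ∈ VB → b' ∈ VB → b ≠ b' → (P' b b').map π = P b b')
    (hW' : ∀ u v : V, W' (u, v) = W (π u, π v))
    (hxgone : ∀ b b', b ∈ VB → b' ∈ VB → b ≠ b' → x ∉ P' b b')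
    (hsplit1 : ∀ b b', Thru VB P x b b' → b ∈ S1 → x1 ∈ P' b b' ∧ x2 ∉ P' b b')
    (hsplit2 : ∀ b b', Thru VB P x b b' → b ∈ S2 → x2 ∈ P' b b' ∧ x1 ∉ P' b b') :
    ∀ b b1 b2 : V, b ∈ VB → b1 ∈ VB → b2 ∈ VB → b ≠ b1 → b ≠ b2 → b1 ≠ b2 →
      pathLen W' (P' b b1) = pathLen W (P b b1) ∧
      interLen W' (P' b b1) (P' b b2) = interLen W (P b b1) (P b b2) ∧
      interLen W' (P' b1 b) (P' b2 b) = interLen W (P b1 b) (P b2 b) :=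
  stmt_11_general W VB P x S1 S2 R1 R2 hSdisj hRdisj hSuni hRuni hsep x1 x2 W' P' π hπ1 hπ2 hπid
    hproj hW' hxgone hsplit1 hsplit2
end

section
/- In a network graph with tree consistency, fix boundary vertices u, v and a vertex x on P(u,v) at cumulative distance δ from u along P(u,v). For any boundary vertex z: if |P(u,v) ∩ P(u,z)| ≥ δ then x lies on P(u,z) at cumulative distance δ from u along P(u,z). -/
def distTo {V : Type} [DecidableEq V] (W : V × V → ℝ) (p : List V) (x : V) : ℝ :=
  ((pathEdges (p.takeWhile (fun v => v ≠ x) ++ [x])).map W).sum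

/-!
Both paths start at `u`, so the common part `c` of `P(u,v)` and `P(u,z)` given by tree
consistency is an initial segment of each of them. The overlap of the two paths is then exactly
the weight of `c`. Weights along `P(u,v)` are positive, so a vertex of `P(u,v)` whose distance
from `u` is at most that weight lies on `c`, where the distances from `u` along both paths agree.
-/

section

variable {V : Type}

theorem pathEdges_append (c t : List V) :
    pathEdges (c ++ t) = pathEdges c ++ pathEdges (c.getLast?.toList ++ t) := by
  induction c with
  | nil => rfl
  | cons a c ih =>
    cases c with
    | nil => rfl
    | cons b c =>
      rw [List.getLast?_cons_cons]
      exact congrArg ((a, b) :: ·) ih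

theorem snd_mem_of_mem_pathEdges {p : List V} {e : V × V} (he : e ∈ pathEdges p) : e.2 ∈ p :=
  List.mem_of_mem_tail (List.of_mem_zip he).2

theorem snd_mem_of_mem_pathEdges_toList_append {o : Option V} {t : List V} {e : V × V}
    (he : e ∈ pathEdges (o.toList ++ t)) : e.2 ∈ t := by
  have := (List.of_mem_zip he).2
  cases o with
  | none => exact List.mem_of_mem_tail this
  | some a => exact this

theorem List.IsPrefix.pathEdges {c p : List V} (h : c <+: p) :
    _root_.pathEdges c <+: _root_.pathEdges p := by
  obtain ⟨t, rfl⟩ := h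
  rw [pathEdges_append]
  exact List.prefix_append _ _

theorem rel_of_mem_pathEdges {E : V → V → Prop} {p : List V} (hp : p.IsChain E) {e : V × V}
    (he : e ∈ pathEdges p) : E e.1 e.2 := by
  induction p with
  | nil => simp [pathEdges] at he
  | cons a p ih =>
    cases p with
    | nil => simp [pathEdges] at he
    | cons b p =>
      rw [List.isChain_cons_cons] at hp
      rcases List.mem_cons.mp he with rfl | he
      · exact hp.1
      · exact ih hp.2 he

theorem List.IsInfix.isPrefix_of_head?_mem_s15 {c p : List V} (hcp : c <:+: p) (hp : p.Nodup) {a : V}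
    (hpa : p.head? = some a) (ha : a ∈ c) : c <+: p := by
  obtain ⟨s, t, rfl⟩ := hcp
  cases s with
  | nil => exact ⟨t, by simp⟩
  | cons b s =>
    obtain rfl : b = a := by simpa using hpa
    simp_all [List.nodup_cons]

theorem List.Nodup.eq_singleton_of_head?_of_getLast? {c : List V} (hc : c.Nodup) {a : V}
    (hhead : c.head? = some a) (hlast : c.getLast? = some a) : c = [a] := by
  obtain ⟨c, rfl⟩ : ∃ c', c = a :: c' := by
    cases c <;> simp_all
  cases c with
  | nil => rfl
  | cons b c =>
    rw [List.getLast?_cons_cons] at hlast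
    exact absurd (List.mem_of_getLast? hlast) (List.nodup_cons.mp hc).1

theorem List.IsPrefix.head?_eq_s15 {c p : List V} (hcp : c <+: p) (hc : c ≠ []) :
    c.head? = p.head? := by
  obtain ⟨t, rfl⟩ := hcp
  obtain ⟨a, c, rfl⟩ := List.exists_cons_of_ne_nil hc
  rfl

theorem sum_pathEdges_lt_of_isPrefix (W : V × V → ℝ) {c l : List V} (hcl : c <+: l) (hc : c ≠ [])
    (hlen : c.length < l.length) (hW : ∀ e ∈ pathEdges l, 0 < W e) :
    ((pathEdges c).map W).sum < ((pathEdges l).map W).sum := by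
  obtain ⟨t, rfl⟩ := hcl
  obtain ⟨a, ha⟩ := Option.ne_none_iff_exists'.mp (List.getLast?_eq_none_iff.not.mpr hc)
  obtain ⟨b, t, rfl⟩ := List.exists_cons_of_ne_nil (show t ≠ [] by rintro rfl; simp at hlen)
  rw [pathEdges_append] at hW ⊢
  rw [List.map_append, List.sum_append, lt_add_iff_pos_right]
  refine List.sum_pos _ (fun w hw => ?_) (by simp [ha, pathEdges])
  obtain ⟨e, he, rfl⟩ := List.mem_map.mp hw
  exact hW e (List.mem_append_right _ he)

theorem exists_common_prefix_of_treeConsistent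
    {E : V → V → Prop} {VB : Set V} {P : V → V → List V}
    (hwf : WellFormed E VB P) (htc : TreeConsistent VB P) {u v z : V}
    (hu : u ∈ VB) (hv : v ∈ VB) (hz : z ∈ VB) (huv : u ≠ v) (huz : u ≠ z) :
    ∃ c : List V, c <+: P u v ∧ c <+: P u z ∧ c ≠ [] ∧ ∀ y ∈ P u v, y ∈ P u z → y ∈ c := by
  obtain ⟨hpu, -, hp, -, -⟩ := hwf u v hu hv huv
  obtain ⟨hqu, -, hq, -, -⟩ := hwf u z hu hz huz
  obtain ⟨c, hcp, hcq, hc⟩ := htc u v u z hu hv hu hz huv huz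
  have huc : u ∈ c := (hc u).mp ⟨List.mem_of_mem_head? hpu, List.mem_of_mem_head? hqu⟩
  have hcne : c ≠ [] := List.ne_nil_of_mem huc
  have hcp : c <+: P u v := hcp.isPrefix_of_head?_mem_s15 hp hpu huc
  refine ⟨c, hcp, ?_, hcne, fun y hyp hyq => (hc y).mp ⟨hyp, hyq⟩⟩
  rcases hcq with hcq | hcq
  · exact hcq.isPrefix_of_head?_mem_s15 hq hqu huc
  · -- `c` runs from `u` in both directions, so it is the trivial path `[u]`
    have hrev : c.reverse <+: P u z :=
      hcq.isPrefix_of_head?_mem_s15 hq hqu (List.mem_reverse.mpr huc)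
    have hhead : c.head? = some u := (hcp.head?_eq_s15 hcne).trans hpu
    have hlast : c.getLast? = some u := by
      rw [← List.head?_reverse, hrev.head?_eq_s15 (by simpa using hcne), hqu]
    rw [(hp.sublist hcp.sublist).eq_singleton_of_head?_of_getLast? hhead hlast] at hrev ⊢
    simpa using hrev

variable [DecidableEq V]

theorem takeWhile_ne_append_singleton_isPrefix {p : List V} {x : V} (hx : x ∈ p) :
    p.takeWhile (fun v => v ≠ x) ++ [x] <+: p := by
  induction p with
  | nil => simp at hx
  | cons a p ih =>
    by_cases hax : a = x
    · subst hax
      simp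
    · have hxp : x ∈ p := (List.mem_cons.mp hx).resolve_left (Ne.symm hax)
      simpa [List.takeWhile_cons, hax] using ih hxp

theorem takeWhile_ne_append_of_mem {c : List V} (t : List V) {x : V} (hx : x ∈ c) :
    (c ++ t).takeWhile (fun v => v ≠ x) = c.takeWhile (fun v => v ≠ x) := by
  induction c with
  | nil => simp at hx
  | cons a c ih =>
    by_cases hax : a = x
    · simp [hax]
    · have hxc : x ∈ c := (List.mem_cons.mp hx).resolve_left (Ne.symm hax)
      simpa [List.takeWhile_cons, hax] using ih hxc

theorem distTo_append_of_mem (W : V × V → ℝ) {c : List V} (t : List V) {x : V} (hx : x ∈ c) :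
    distTo W (c ++ t) x = distTo W c x := by
  rw [distTo, distTo, takeWhile_ne_append_of_mem t hx]

theorem distTo_of_isPrefix (W : V × V → ℝ) {c p : List V} (hcp : c <+: p) {x : V} (hx : x ∈ c) :
    distTo W p x = distTo W c x := by
  obtain ⟨t, rfl⟩ := hcp
  exact distTo_append_of_mem W t hx

theorem mem_of_distTo_le (W : V × V → ℝ) {c p : List V} (hcp : c <+: p) (hc : c ≠ [])
    (hW : ∀ e ∈ pathEdges p, 0 < W e) {x : V} (hx : x ∈ p)
    (hdist : distTo W p x ≤ ((pathEdges c).map W).sum) : x ∈ c := by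
  by_contra hxc
  set l := p.takeWhile (fun v => v ≠ x) ++ [x]
  have hlp : l <+: p := takeWhile_ne_append_singleton_isPrefix hx
  have hxl : x ∈ l := by simp [l]
  have hlen : c.length < l.length := by
    by_contra! hle
    exact hxc ((List.prefix_of_prefix_length_le hlp hcp hle).subset hxl)
  have hcl : c <+: l := List.prefix_of_prefix_length_le hcp hlp hlen.le
  exact (sum_pathEdges_lt_of_isPrefix W hcl hc hlen fun e he =>
    hW e (hlp.pathEdges.subset he)).not_ge hdist

theorem interLen_eq_of_isPrefix (W : V × V → ℝ) {c p q : List V} (hcp : c <+: p) (hcq : c <+: q)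
    (hp : p.Nodup) (hpq : ∀ y ∈ p, y ∈ q → y ∈ c) :
    interLen W p q = ((pathEdges c).map W).sum := by
  obtain ⟨t, rfl⟩ := hcp
  have hct : c.Disjoint t := List.disjoint_of_nodup_append hp
  have hc : (pathEdges c).filter (fun e => decide (e ∈ pathEdges q)) = pathEdges c :=
    List.filter_eq_self.mpr fun e he => by simpa using hcq.pathEdges.subset he
  have ht :
      (pathEdges (c.getLast?.toList ++ t)).filter (fun e => decide (e ∈ pathEdges q)) = [] := by
    refine List.filter_eq_nil_iff.mpr fun e he heq => ?_
    have he2 : e.2 ∈ t := snd_mem_of_mem_pathEdges_toList_append he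
    have he2q : e.2 ∈ q := snd_mem_of_mem_pathEdges (by simpa using heq)
    exact hct (hpq e.2 (List.mem_append_right _ he2) he2q) he2
  rw [interLen, pathEdges_append, List.filter_append, hc, ht, List.append_nil]

end

/-- In a tree-consistent network graph with positive edge weights, if `x` lies
on `P(u,v)` at cumulative distance `δ` from `u` and
`|P(u,v) ∩ P(u,z)| ≥ δ`, then `x` lies on `P(u,z)` at cumulative distance `δ`
from `u`. -/
theorem stmt_15 {V : Type} [DecidableEq V]
    (E : V → V → Prop) (W : V × V → ℝ) (VB : Set V) (P : V → V → List V)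
    (hwf : WellFormed E VB P) (htc : TreeConsistent VB P)
    (hWpos : ∀ u v : V, E u v → 0 < W (u, v))
    (u v z : V) (hu : u ∈ VB) (hv : v ∈ VB) (hz : z ∈ VB)
    (huv : u ≠ v) (huz : u ≠ z)
    (x : V) (hx : x ∈ P u v)
    (hge : interLen W (P u v) (P u z) ≥ distTo W (P u v) x) :
    x ∈ P u z ∧ distTo W (P u z) x = distTo W (P u v) x := by
  obtain ⟨-, -, hp, hchain, -⟩ := hwf u v hu hv huv
  obtain ⟨c, hcp, hcq, hcne, hcommon⟩ :=
    exists_common_prefix_of_treeConsistent hwf htc hu hv hz huv huz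
  have hW : ∀ e ∈ pathEdges (P u v), 0 < W e := fun e he =>
    hWpos _ _ (rel_of_mem_pathEdges hchain he)
  rw [interLen_eq_of_isPrefix W hcp hcq hp hcommon] at hge
  have hxc : x ∈ c := mem_of_distTo_le W hcp hcne hW hx hge
  exact ⟨hcq.subset hxc, by rw [distTo_of_isPrefix W hcq hxc, distTo_of_isPrefix W hcp hxc]⟩
end
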